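/- Let α be a nonnegative integer. For all real polynomials f and g: (𝓛̆_{2α+4} f, g)_{w(α)} = −I₂(f,g) − (α+1)·f'(0)·g(0). -/

import Mathlib

open Real MeasureTheory Finset

noncomputable section

/-- Pochhammer symbol `(a)_m = a (a+1) ⋯ (a+m-1)`. -/
def poch (a : ℝ) (m : ℕ) : ℝ := (ascPochhammer ℝ m).eval a

/-- Generalized Laguerre polynomial `L_n^a(x)`. -/
def lag (a : ℝ) (n : ℕ) (x : ℝ) : ℝ :=
  ∑ k ∈ Finset.range (n + 1),
    ((-1 : ℝ) ^ k / (Nat.factorial k : ℝ)) *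
      (poch (a + (k : ℝ) + 1) (n - k) / (Nat.factorial (n - k) : ℝ)) * x ^ k

/-- The component `T_n^a(x)` of the Sobolev-Laguerre polynomials. -/
def Tpoly (a : ℝ) (n : ℕ) (x : ℝ) : ℝ :=
  if n = 0 then 0 else
    -(poch (a + 2) (n - 1) / (Nat.factorial n : ℝ)) * x * lag (a + 2) (n - 1) x

/-- The component `U_n^a(x)` of the Sobolev-Laguerre polynomials. -/
def Upoly (a : ℝ) (n : ℕ) (x : ℝ) : ℝ :=
  if n < 2 then 0 else
    (poch (a + 3) (n - 2) / ((a + 1) * (a + 3) * (Nat.factorial (n - 2) : ℝ))) *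
      (x ^ 2 / ((n : ℝ) - 1) * lag (a + 4) (n - 2) x
        - (a + 2) * x * lag (a + 2) (n - 1) x
        - ((n : ℝ) + a + 1) * lag a n x)

/-- The component `V_n^a(x)` of the Sobolev-Laguerre polynomials. -/
def Vpoly (a : ℝ) (n : ℕ) (x : ℝ) : ℝ :=
  if n < 2 then 0 else
    (1 / (a + 1)) * (poch (a + 3) (n - 2) / (Nat.factorial (n - 1) : ℝ)) *
      (poch (a + 4) (n - 2) / (Nat.factorial n : ℝ)) * x ^ 2 * lag (a + 4) (n - 2) x

/-- The Sobolev-Laguerre polynomial `L_n^{α,M,N}(x)`. -/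
def sobLag (α : ℕ) (M N : ℝ) (n : ℕ) (x : ℝ) : ℝ :=
  lag (α : ℝ) n x + M * Tpoly (α : ℝ) n x + N * Upoly (α : ℝ) n x
    + M * N * Vpoly (α : ℝ) n x

/-- The classical Laguerre differential expression `𝓛^α y`. -/
def Lcl (α : ℕ) (y : ℝ → ℝ) (x : ℝ) : ℝ :=
  x * iteratedDeriv 2 y x + ((α : ℝ) + 1 - x) * deriv y x

/-- The Laguerre-type differential expression `𝓛̆_{2α+4} y` of order `2α+4`. -/
def Lbreve (α : ℕ) (y : ℝ → ℝ) (x : ℝ) : ℝ :=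
  ((-1 : ℝ) ^ (α + 1) / (Nat.factorial (α + 2) : ℝ)) * Real.exp x * x *
    iteratedDeriv (α + 2) (fun t => Real.exp (-t) *
      iteratedDeriv (α + 2) (fun s => s ^ (α + 1) * y s) t) x

/-- The expression `E y`. -/
def Eop (α : ℕ) (y : ℝ → ℝ) (x : ℝ) : ℝ :=
  -((α : ℝ) + 2) * Real.exp x * x *
    iteratedDeriv (α + 4) (fun t => Real.exp (-t) * t ^ 2 *
      iteratedDeriv (α + 4) (fun s => s ^ (α + 1) * y s) t) x

/-- The expression `F y`. -/
def Fop (α : ℕ) (y : ℝ → ℝ) (x : ℝ) : ℝ :=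
  ((α : ℝ) + 4) * Real.exp x * x *
    iteratedDeriv (α + 3) (fun t => Real.exp (-t) * (t + 2 * (α : ℝ) + 4) *
      iteratedDeriv (α + 3) (fun s => s ^ (α + 1) * y s) t) x

/-- The expression `G y`. -/
def Gop (α : ℕ) (y : ℝ → ℝ) (x : ℝ) : ℝ :=
  ((α : ℝ) + 1) * ((α : ℝ) + 3) * ((α : ℝ) + 4) * Real.exp x *
    iteratedDeriv (α + 2) (fun t => Real.exp (-t) * (t + 2 * (α : ℝ) + 4) *
      iteratedDeriv (α + 2) (fun s => s ^ α * y s) t) x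

/-- The differential expression `𝓛̃_{2α+8} y` of order `2α+8`. -/
def Ltilde (α : ℕ) (y : ℝ → ℝ) (x : ℝ) : ℝ :=
  ((-1 : ℝ) ^ α / (((α : ℝ) + 1) * (Nat.factorial (α + 4) : ℝ))) *
    (Eop α y x + Fop α y x + Gop α y x)

/-- The constant `q_j = (α+2-j)(α+3+j)/(α+2)`. -/
def qcoef (α j : ℕ) : ℝ := ((α : ℝ) + 2 - (j : ℝ)) * ((α : ℝ) + 3 + (j : ℝ)) / ((α : ℝ) + 2)

/-- The expression `H_j y`. -/
def Hop (α j : ℕ) (y : ℝ → ℝ) (x : ℝ) : ℝ :=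
  ((-1 : ℝ) ^ (α + j) / (((α : ℝ) + 1) * (Nat.factorial (α + 3 + j) : ℝ))) *
    Real.exp x * x *
    iteratedDeriv (α + 3 + j) (fun t => Real.exp (-t) * t ^ j * (t + qcoef α j) *
      iteratedDeriv (α + 3 + j) (fun s => s ^ (α + 1) * y s) t) x

/-- The differential expression `𝓛̂_{4α+10} y` of order `4α+10`. -/
def Lhat (α : ℕ) (y : ℝ → ℝ) (x : ℝ) : ℝ :=
  ∑ j ∈ Finset.range (α + 3),
    (poch ((α : ℝ) + 3 - (j : ℝ)) (2 * j) /
      ((Nat.factorial j : ℝ) * (Nat.factorial (j + 1) : ℝ))) * Hop α j y x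

/-- The Sobolev-Laguerre differential operator `𝓛^{α,M,N}`. -/
def LsobOp (α : ℕ) (M N : ℝ) (y : ℝ → ℝ) (x : ℝ) : ℝ :=
  Lcl α y x + M * Lbreve α y x + N * Ltilde α y x + M * N * Lhat α y x

/-- The eigenvalue component `λ_n^{α,A}`. -/
def lamA (α n : ℕ) : ℝ := poch (n : ℝ) (α + 2) / (Nat.factorial (α + 2) : ℝ)

/-- The eigenvalue component `λ_n^{α,B}`. -/
def lamB (α n : ℕ) : ℝ :=
  ((α : ℝ) + 2) / ((α : ℝ) + 1) * poch ((n : ℝ) - 2) (α + 4) / (Nat.factorial (α + 4) : ℝ)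
    + 1 / ((α : ℝ) + 1) * poch ((n : ℝ) - 1) (α + 3) / (Nat.factorial (α + 3) : ℝ)

/-- The eigenvalue component `λ_n^{α,C}`. -/
def lamC (α n : ℕ) : ℝ :=
  (1 / ((α : ℝ) + 1)) * ∑ j ∈ Finset.range (α + 3),
    if (j : ℤ) ≤ (n : ℤ) - 2 then
      (poch ((α : ℝ) + 3 - (j : ℝ)) (2 * j) /
        ((Nat.factorial j : ℝ) * (Nat.factorial (j + 1) : ℝ))) *
        poch ((n : ℝ) - 1 - (j : ℝ)) (j + α + 3) / (Nat.factorial (j + α + 3) : ℝ)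
    else 0

/-- The combined eigenvalue `λ_n^{α,M,N}`. -/
def lamSob (α : ℕ) (M N : ℝ) (n : ℕ) : ℝ :=
  (n : ℝ) + M * lamA α n + N * lamB α n + M * N * lamC α n

/-- The Laguerre inner product `(f,g)_{w(α)}`. -/
def ipW (α : ℕ) (f g : ℝ → ℝ) : ℝ :=
  (1 / (Nat.factorial α : ℝ)) *
    ∫ x in Set.Ioi (0 : ℝ), f x * g x * Real.exp (-x) * x ^ α

/-- The Sobolev-type inner product `(f,g)_{w(α,M,N)}`. -/
def ipSob (α : ℕ) (M N : ℝ) (f g : ℝ → ℝ) : ℝ :=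
  ipW α f g + M * f 0 * g 0 + N * deriv f 0 * deriv g 0

/-- The integral `I₁^α(f,g)`. -/
def I1 (α : ℕ) (f g : ℝ → ℝ) : ℝ :=
  (1 / (Nat.factorial α : ℝ)) *
    ∫ x in Set.Ioi (0 : ℝ), Real.exp (-x) * x ^ (α + 1) * deriv f x * deriv g x

/-- The integral `I₂^α(f,g)`. -/
def I2 (α : ℕ) (f g : ℝ → ℝ) : ℝ :=
  (1 / ((Nat.factorial α : ℝ) * (Nat.factorial (α + 2) : ℝ))) *
    ∫ x in Set.Ioi (0 : ℝ), Real.exp (-x) *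
      iteratedDeriv (α + 2) (fun s => s ^ (α + 1) * f s) x *
      iteratedDeriv (α + 2) (fun s => s ^ (α + 1) * g s) x

/-- The integral `I₃,₁^α(f,g)`. -/
def I31 (α : ℕ) (f g : ℝ → ℝ) : ℝ :=
  (((α : ℝ) + 2) / ((Nat.factorial (α + 1) : ℝ) * (Nat.factorial (α + 4) : ℝ))) *
    ∫ x in Set.Ioi (0 : ℝ), Real.exp (-x) * x ^ 2 *
      iteratedDeriv (α + 4) (fun s => s ^ (α + 1) * f s) x *
      iteratedDeriv (α + 4) (fun s => s ^ (α + 1) * g s) x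

/-- The integral `I₃,₂^α(f,g)`. -/
def I32 (α : ℕ) (f g : ℝ → ℝ) : ℝ :=
  (1 / ((Nat.factorial (α + 1) : ℝ) * (Nat.factorial (α + 3) : ℝ))) *
    ∫ x in Set.Ioi (0 : ℝ), Real.exp (-x) * (x + 2 * (α : ℝ) + 4) *
      iteratedDeriv (α + 3) (fun s => s ^ (α + 1) * f s) x *
      iteratedDeriv (α + 3) (fun s => s ^ (α + 1) * g s) x

/-- The integral `I₃,₃^α(f,g)`. -/
def I33 (α : ℕ) (f g : ℝ → ℝ) : ℝ :=
  (1 / ((Nat.factorial α : ℝ) * (Nat.factorial (α + 2) : ℝ))) *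
    ∫ x in Set.Ioi (0 : ℝ), Real.exp (-x) * (x + 2 * (α : ℝ) + 4) *
      iteratedDeriv (α + 2) (fun s => s ^ α * f s) x *
      iteratedDeriv (α + 2) (fun s => s ^ α * g s) x

/-- The integral `I₄,j^α(f,g)`. -/
def I4 (α j : ℕ) (f g : ℝ → ℝ) : ℝ :=
  (1 / ((Nat.factorial (α + 1) : ℝ) * (Nat.factorial (α + 3 + j) : ℝ))) *
    ∫ x in Set.Ioi (0 : ℝ), Real.exp (-x) * x ^ j * (x + qcoef α j) *
      iteratedDeriv (α + 3 + j) (fun s => s ^ (α + 1) * f s) x *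
      iteratedDeriv (α + 3 + j) (fun s => s ^ (α + 1) * g s) x

/-- The boundary functional `(S₁ f)(0)`. -/
def S1 (α : ℕ) (f : ℝ → ℝ) : ℝ :=
  ∑ j ∈ Finset.range (α + 3),
    ((-1 : ℝ) ^ j * poch ((α : ℝ) + 3 - (j : ℝ)) (2 * j) * ((α : ℝ) + 2 + (j : ℝ)) /
      ((Nat.factorial j : ℝ) * (Nat.factorial (j + 2) : ℝ))) * iteratedDeriv (j + 2) f 0

/-- The boundary functional `(S₂ f)(0)`. -/
def S2 (α : ℕ) (f : ℝ → ℝ) : ℝ :=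
  ∑ j ∈ Finset.Icc 1 (α + 2),
    ((-1 : ℝ) ^ (j + 1) * poch ((α : ℝ) + 3 - (j : ℝ)) (2 * j) /
      ((Nat.factorial j : ℝ) * (Nat.factorial (j + 1) : ℝ))) * iteratedDeriv (j + 1) f 0

section Aux
open Filter

lemma polyExp_tendsto (p : Polynomial ℝ) :
    Tendsto (fun x => p.eval x * Real.exp (-x)) atTop (nhds 0) := by
  simpa [Real.exp_neg, div_eq_mul_inv] using p.tendsto_div_exp_atTop

lemma polyExp_integrable (p : Polynomial ℝ) :
    IntegrableOn (fun x => p.eval x * Real.exp (-x)) (Set.Ioi (0:ℝ)) := by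
  apply integrable_of_isBigO_exp_neg (b := 1/2) (by norm_num)
  · exact (p.continuous_aeval.mul (Real.continuous_exp.comp continuous_neg)).continuousOn
  · have ht : Tendsto (fun x => p.eval x * Real.exp (-(x/2))) atTop (nhds 0) := by
      have h2 : Tendsto (fun x : ℝ => x / 2) atTop atTop :=
        tendsto_id.atTop_div_const (by norm_num)
      have := (polyExp_tendsto (p.comp (Polynomial.C 2 * Polynomial.X))).comp h2
      simpa [Function.comp_def, Polynomial.eval_comp, mul_div_cancel₀] using this
    have hlo : (fun x => p.eval x * Real.exp (-x)) =o[atTop] fun x => Real.exp (-(1/2) * x) := by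
      rw [Asymptotics.isLittleO_iff_tendsto' (by
        filter_upwards with x hx; exact absurd hx (Real.exp_ne_zero _))]
      apply ht.congr'
      filter_upwards with x
      rw [eq_div_iff (Real.exp_ne_zero _), mul_assoc, ← Real.exp_add]
      ring_nf
    exact hlo.isBigO

def polyInt (p : Polynomial ℝ) : ℝ := ∫ x in Set.Ioi (0:ℝ), p.eval x * Real.exp (-x)

lemma polyInt_sub (p q : Polynomial ℝ) : polyInt (p - q) = polyInt p - polyInt q := by
  unfold polyInt
  rw [← integral_sub (polyExp_integrable p) (polyExp_integrable q)]
  simp [sub_mul]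

lemma polyInt_derivative (p : Polynomial ℝ) :
    polyInt (Polynomial.derivative p) = polyInt p - p.eval 0 := by
  have key : ∫ x in Set.Ioi (0:ℝ),
      ((Polynomial.derivative p).eval x * Real.exp (-x) - p.eval x * Real.exp (-x))
      = 0 - p.eval 0 * Real.exp (-0) := by
    apply integral_Ioi_of_hasDerivAt_of_tendsto' (f := fun x => p.eval x * Real.exp (-x))
    · intro x _
      have he : HasDerivAt (fun y : ℝ => Real.exp (-y)) (Real.exp (-x) * (-1)) x :=
        (Real.hasDerivAt_exp (-x)).comp x (hasDerivAt_neg x)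
      have : HasDerivAt (fun x => p.eval x * Real.exp (-x)) _ x := (p.hasDerivAt x).mul he
      exact this.congr_deriv (by ring)
    · exact (polyExp_integrable _).sub (polyExp_integrable _)
    · exact polyExp_tendsto p
  have h2 := integral_sub (μ := volume.restrict (Set.Ioi (0:ℝ)))
    (polyExp_integrable (Polynomial.derivative p)) (polyExp_integrable p)
  unfold polyInt
  rw [h2] at key
  simp only [neg_zero, Real.exp_zero, mul_one, zero_sub] at key
  linarith

lemma polyInt_step (a b : Polynomial ℝ) :
    polyInt ((Polynomial.derivative a - a) * b) =
      -(a.eval 0 * b.eval 0) - polyInt (a * Polynomial.derivative b) := by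
  have h1 : (Polynomial.derivative a - a) * b =
      Polynomial.derivative (a * b) - a * Polynomial.derivative b - a * b := by
    rw [Polynomial.derivative_mul]; ring
  rw [h1, polyInt_sub, polyInt_sub, polyInt_derivative]
  simp only [Polynomial.eval_mul]
  ring

lemma polyInt_iter (n : ℕ) (a : Polynomial ℝ) : ∀ b : Polynomial ℝ,
    polyInt (((fun q => Polynomial.derivative q - q)^[n] a) * b) =
      (-1:ℝ)^n * polyInt (a * Polynomial.derivative^[n] b) +
      ∑ k ∈ Finset.range n, (-1:ℝ)^(k+1) *
        (((fun q => Polynomial.derivative q - q)^[n-1-k] a).eval 0) *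
        ((Polynomial.derivative^[k] b).eval 0) := by
  induction n with
  | zero => intro b; simp
  | succ n ih =>
    intro b
    rw [Function.iterate_succ_apply', polyInt_step, ih (Polynomial.derivative b),
      ← Function.iterate_succ_apply, Finset.sum_range_succ']
    simp only [Nat.add_sub_cancel, Function.iterate_zero_apply, pow_zero,
      Nat.sub_zero]
    have hsum : ∀ k ∈ Finset.range n,
        (-1:ℝ)^(k+1+1) * (((fun q => Polynomial.derivative q - q)^[n-(k+1)] a).eval 0) *
          ((Polynomial.derivative^[k+1] b).eval 0)
        = -((-1:ℝ)^(k+1) * (((fun q => Polynomial.derivative q - q)^[n-1-k] a).eval 0) *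
          ((Polynomial.derivative^[k] (Polynomial.derivative b)).eval 0)) := by
      intro k hk
      rw [← Function.iterate_succ_apply]
      have : n-(k+1) = n-1-k := by omega
      rw [this, pow_succ]
      ring
    rw [Finset.sum_congr rfl hsum, Finset.sum_neg_distrib]
    rw [pow_succ]
    ring

lemma iteratedDeriv_polyEval (n : ℕ) (p : Polynomial ℝ) :
    iteratedDeriv n (fun x => p.eval x) = fun x => (Polynomial.derivative^[n] p).eval x := by
  induction n generalizing p with
  | zero => simp
  | succ n ih =>
    rw [iteratedDeriv_succ']
    have hd : deriv (fun x => p.eval x) = fun x => (Polynomial.derivative p).eval x :=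
      funext fun x => Polynomial.deriv p
    rw [hd, ih, ← Function.iterate_succ_apply]

lemma iteratedDeriv_expPoly (n : ℕ) (p : Polynomial ℝ) :
    iteratedDeriv n (fun x => Real.exp (-x) * p.eval x) =
      fun x => Real.exp (-x) *
        (((fun q => Polynomial.derivative q - q)^[n]) p).eval x := by
  induction n generalizing p with
  | zero => simp
  | succ n ih =>
    rw [iteratedDeriv_succ']
    have hd : deriv (fun x => Real.exp (-x) * p.eval x) =
        fun x => Real.exp (-x) * (Polynomial.derivative p - p).eval x := by
      funext x
      have he : HasDerivAt (fun y : ℝ => Real.exp (-y)) (Real.exp (-x) * (-1)) x :=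
        (Real.hasDerivAt_exp (-x)).comp x (hasDerivAt_neg x)
      have h : HasDerivAt (fun x => Real.exp (-x) * p.eval x) _ x := he.mul (p.hasDerivAt x)
      rw [h.deriv]
      simp only [Polynomial.eval_sub]
      ring
    rw [hd, ih, ← Function.iterate_succ_apply]

lemma iter_deriv_eval_zero (p : Polynomial ℝ) (k : ℕ) :
    (Polynomial.derivative^[k] p).eval 0 = (Nat.factorial k : ℝ) * p.coeff k := by
  rw [← Polynomial.coeff_zero_eq_eval_zero, Polynomial.coeff_iterate_derivative]
  simp [Nat.descFactorial_self, nsmul_eq_mul]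

lemma coeff_Xpow_mul_lt (p : Polynomial ℝ) (n k : ℕ) (h : k < n) :
    (Polynomial.X ^ n * p).coeff k = 0 := by
  rw [(Polynomial.commute_X_pow p n).eq, Polynomial.coeff_mul_X_pow']
  simp [Nat.not_le_of_lt h]

end Aux

/-- `(𝓛̆_{2α+4} f, g)_{w(α)} = -I₂(f,g) - (α+1) f'(0) g(0)`. -/
theorem Lbreve_bilinear_form (α : ℕ) (f g : Polynomial ℝ) :
    ipW α (Lbreve α (fun x => Polynomial.eval x f)) (fun x => Polynomial.eval x g) =
      -I2 α (fun x => Polynomial.eval x f) (fun x => Polynomial.eval x g) -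
        ((α : ℝ) + 1) * deriv (fun x => Polynomial.eval x f) 0 *
          Polynomial.eval 0 g := by
  have hIf : iteratedDeriv (α+2) (fun s : ℝ => s ^ (α+1) * Polynomial.eval s f)
      = fun t => (Polynomial.derivative^[α+2] (Polynomial.X ^ (α+1) * f)).eval t := by
    rw [show (fun s : ℝ => s ^ (α+1) * Polynomial.eval s f)
        = fun s => (Polynomial.X ^ (α+1) * f).eval s from by funext s; simp,
      iteratedDeriv_polyEval]
  have hIg : iteratedDeriv (α+2) (fun s : ℝ => s ^ (α+1) * Polynomial.eval s g)
      = fun t => (Polynomial.derivative^[α+2] (Polynomial.X ^ (α+1) * g)).eval t := by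
    rw [show (fun s : ℝ => s ^ (α+1) * Polynomial.eval s g)
        = fun s => (Polynomial.X ^ (α+1) * g).eval s from by funext s; simp,
      iteratedDeriv_polyEval]
  have hL : ∀ x : ℝ, Lbreve α (fun x => Polynomial.eval x f) x * Polynomial.eval x g *
        Real.exp (-x) * x ^ α
      = ((-1:ℝ)^(α+1) / (Nat.factorial (α+2) : ℝ)) *
        ((Polynomial.X ^ (α+1) *
          ((fun q => Polynomial.derivative q - q)^[α+2]
            (Polynomial.derivative^[α+2] (Polynomial.X ^ (α+1) * f)) * g)).eval x *
          Real.exp (-x)) := by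
    intro x
    rw [Lbreve]
    rw [show (fun t => Real.exp (-t) *
          iteratedDeriv (α+2) (fun s => s ^ (α+1) * Polynomial.eval s f) t)
        = fun t => Real.exp (-t) *
            (Polynomial.derivative^[α+2] (Polynomial.X ^ (α+1) * f)).eval t from by rw [hIf]]
    rw [iteratedDeriv_expPoly]
    simp only [Polynomial.eval_mul, Polynomial.eval_pow, Polynomial.eval_X]
    rw [Real.exp_neg]
    field_simp
    ring
  have hLHS : ipW α (Lbreve α (fun x => Polynomial.eval x f)) (fun x => Polynomial.eval x g)
      = (1 / (Nat.factorial α : ℝ)) * (((-1:ℝ)^(α+1) / (Nat.factorial (α+2) : ℝ)) *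
          polyInt (Polynomial.X ^ (α+1) *
            ((fun q => Polynomial.derivative q - q)^[α+2]
              (Polynomial.derivative^[α+2] (Polynomial.X ^ (α+1) * f)) * g))) := by
    have hint : (∫ x in Set.Ioi (0:ℝ), Lbreve α (fun x => Polynomial.eval x f) x *
          Polynomial.eval x g * Real.exp (-x) * x ^ α)
        = ((-1:ℝ)^(α+1) / (Nat.factorial (α+2) : ℝ)) *
          polyInt (Polynomial.X ^ (α+1) *
            ((fun q => Polynomial.derivative q - q)^[α+2]
              (Polynomial.derivative^[α+2] (Polynomial.X ^ (α+1) * f)) * g)) := by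
      rw [polyInt, ← MeasureTheory.integral_const_mul]
      congr 1
      funext x
      exact hL x
    simp only [ipW]
    rw [hint]
  have hI2 : I2 α (fun x => Polynomial.eval x f) (fun x => Polynomial.eval x g)
      = (1 / ((Nat.factorial α : ℝ) * (Nat.factorial (α+2) : ℝ))) *
        polyInt (Polynomial.derivative^[α+2] (Polynomial.X ^ (α+1) * f) *
          Polynomial.derivative^[α+2] (Polynomial.X ^ (α+1) * g)) := by
    have hint : (∫ x in Set.Ioi (0:ℝ), Real.exp (-x) *
          iteratedDeriv (α+2) (fun s => s ^ (α+1) * Polynomial.eval s f) x *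
          iteratedDeriv (α+2) (fun s => s ^ (α+1) * Polynomial.eval s g) x)
        = polyInt (Polynomial.derivative^[α+2] (Polynomial.X ^ (α+1) * f) *
            Polynomial.derivative^[α+2] (Polynomial.X ^ (α+1) * g)) := by
      rw [polyInt]
      congr 1
      funext x
      rw [congrFun hIf x, congrFun hIg x, Polynomial.eval_mul]
      ring
    simp only [I2]
    rw [hint]
  have hder : deriv (fun x => Polynomial.eval x f) 0 = f.coeff 1 := by
    rw [Polynomial.deriv, ← Polynomial.coeff_zero_eq_eval_zero, Polynomial.coeff_derivative]
    simp
  have hg0 : Polynomial.eval 0 g = g.coeff 0 := (Polynomial.coeff_zero_eq_eval_zero g).symm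
  have hmain := polyInt_iter (α+2)
    (Polynomial.derivative^[α+2] (Polynomial.X ^ (α+1) * f)) (Polynomial.X ^ (α+1) * g)
  have hsum : ∑ k ∈ Finset.range (α+2), (-1:ℝ)^(k+1) *
        (((fun q => Polynomial.derivative q - q)^[α+2-1-k]
          (Polynomial.derivative^[α+2] (Polynomial.X ^ (α+1) * f))).eval 0) *
        ((Polynomial.derivative^[k] (Polynomial.X ^ (α+1) * g)).eval 0)
      = (-1:ℝ)^(α+2) * ((Nat.factorial (α+2) : ℝ) * f.coeff 1) *
          ((Nat.factorial (α+1) : ℝ) * g.coeff 0) := by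
    rw [Finset.sum_eq_single (α+1)]
    · rw [iter_deriv_eval_zero]
      have h1 : α+2-1-(α+1) = 0 := by omega
      rw [h1, Function.iterate_zero_apply, iter_deriv_eval_zero]
      have h2 := Polynomial.coeff_X_pow_mul f (α+1) 1
      rw [show 1+(α+1) = α+2 from by omega] at h2
      have h3 := Polynomial.coeff_X_pow_mul g (α+1) 0
      rw [zero_add] at h3
      rw [h2, h3]
      try ring
    · intro k hk hne
      have hklt : k < α+1 := by
        simp only [Finset.mem_range] at hk; omega
      rw [iter_deriv_eval_zero, coeff_Xpow_mul_lt _ _ _ hklt]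
      ring
    · intro h
      exact absurd (Finset.mem_range.mpr (by omega)) h
  have hP : Polynomial.X ^ (α+1) *
        ((fun q => Polynomial.derivative q - q)^[α+2]
          (Polynomial.derivative^[α+2] (Polynomial.X ^ (α+1) * f)) * g)
      = (fun q => Polynomial.derivative q - q)^[α+2]
          (Polynomial.derivative^[α+2] (Polynomial.X ^ (α+1) * f)) *
        (Polynomial.X ^ (α+1) * g) := by ring
  rw [hLHS, hI2, hder, hg0, hP, hmain, hsum]
  have hfs : (Nat.factorial (α+1) : ℝ) = ((α:ℝ)+1) * (Nat.factorial α : ℝ) := by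
    rw [Nat.factorial_succ]; push_cast; ring
  have hsq : ((-1:ℝ))^(α+1) * (-1)^(α+2) = -1 := by
    rw [← pow_add]
    exact Odd.neg_one_pow ⟨α+1, by ring⟩
  have hfact0 : (Nat.factorial α : ℝ) ≠ 0 := Nat.cast_ne_zero.mpr (Nat.factorial_ne_zero α)
  have hfact2 : (Nat.factorial (α+2) : ℝ) ≠ 0 := Nat.cast_ne_zero.mpr (Nat.factorial_ne_zero _)
  rw [hfs]
  generalize polyInt (Polynomial.derivative^[α+2] (Polynomial.X ^ (α+1) * f) *
    Polynomial.derivative^[α+2] (Polynomial.X ^ (α+1) * g)) = J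
  generalize f.coeff 1 = F1
  generalize g.coeff 0 = G0
  generalize hA : ((-1:ℝ))^(α+1) = A at hsq
  generalize hB : ((-1:ℝ))^(α+2) = B at hsq
  have hB2 : B * B = 1 := by
    rw [← hB, ← pow_add]
    exact Even.neg_one_pow ⟨α+2, by ring⟩
  have hA' : A = -B := by
    calc A = A * (B * B) := by rw [hB2, mul_one]
    _ = A * B * B := by ring
    _ = -B := by rw [hsq]; ring
  subst hA'
  rcases mul_self_eq_one_iff.mp hB2 with h | h <;>
    subst h <;> field_simp <;> ring


end
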